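/- Let τ ∈ [0, 1/2]. Then for any discrete random variable G and any deterministic function W of G, if h(G) and f(G) are two deterministic binary classifiers with P(h(G) ≠ f(G)) ≤ τ and I(f(G); G | W) = 0, then I(h(G); G | W) ≤ h_b(τ) + τ·log 2. -/
import Mathlib


open Real Finset
open scoped Classical

noncomputable section

/-- Probability of an event under a pmf `p` on a finite sample space. -/
def prob {Ω : Type*} [Fintype Ω] (p : Ω → ℝ) (A : Ω → Prop) : ℝ :=
  ∑ ω ∈ Finset.univ.filter (fun ω => A ω), p ω

/-- Pushforward distribution of a random variable `X` under pmf `p`. -/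
def dist' {Ω α : Type*} [Fintype Ω] (p : Ω → ℝ) (X : Ω → α) : α → ℝ :=
  fun a => ∑ ω ∈ Finset.univ.filter (fun ω => X ω = a), p ω

/-- Shannon entropy of a pmf on a finite alphabet (with `0 log 0 = 0`). -/
def entFun {α : Type*} [Fintype α] (q : α → ℝ) : ℝ := -∑ a, q a * Real.log (q a)

/-- Entropy `H(X)` of a random variable. -/
def ent {Ω α : Type*} [Fintype Ω] [Fintype α] (p : Ω → ℝ) (X : Ω → α) : ℝ :=
  entFun (dist' p X)

/-- Conditional entropy `H(X | Z) = H(X, Z) - H(Z)`. -/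
def condEnt {Ω α β : Type*} [Fintype Ω] [Fintype α] [Fintype β]
    (p : Ω → ℝ) (X : Ω → α) (Z : Ω → β) : ℝ :=
  ent p (fun ω => (X ω, Z ω)) - ent p Z

/-- Mutual information `I(X; Z) = H(X) - H(X | Z)`. -/
def mutInf {Ω α β : Type*} [Fintype Ω] [Fintype α] [Fintype β]
    (p : Ω → ℝ) (X : Ω → α) (Z : Ω → β) : ℝ :=
  ent p X - condEnt p X Z

/-- Conditional mutual information `I(X; Z | W) = H(X | W) - H(X | Z, W)`. -/
def condMI {Ω α β γ : Type*} [Fintype Ω] [Fintype α] [Fintype β] [Fintype γ]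
    (p : Ω → ℝ) (X : Ω → α) (Z : Ω → β) (W : Ω → γ) : ℝ :=
  condEnt p X W - condEnt p X (fun ω => (Z ω, W ω))

/-- `p` is a probability mass function. -/
def IsPMF {Ω : Type*} [Fintype Ω] (p : Ω → ℝ) : Prop :=
  (∀ ω, 0 ≤ p ω) ∧ ∑ ω, p ω = 1

/-- Binary entropy function (with the convention `0 log 0 = 0`). -/
def binEnt (x : ℝ) : ℝ := -x * Real.log x - (1 - x) * Real.log (1 - x)

section Aux

variable {Ω α β γ : Type*} [Fintype Ω] [Fintype α] [Fintype β] [Fintype γ]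
variable {p : Ω → ℝ}

lemma dist'_nonneg (hp : IsPMF p) (X : Ω → α) (a : α) : 0 ≤ dist' p X a :=
  Finset.sum_nonneg fun ω _ => hp.1 ω

lemma dist'_sum (hp : IsPMF p) (X : Ω → α) : ∑ a, dist' p X a = 1 := by
  rw [← hp.2]
  exact Finset.sum_fiberwise Finset.univ X p

lemma dist'_marginal_snd (X : Ω → α) (Z : Ω → β) (b : β) :
    ∑ a, dist' p (fun ω => (X ω, Z ω)) (a, b) = dist' p Z b := by
  unfold dist'
  rw [← Finset.sum_fiberwise (Finset.univ.filter fun ω => Z ω = b) X p]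
  refine Finset.sum_congr rfl fun a _ => ?_
  congr 1
  ext ω
  simp [Prod.ext_iff, and_comm]

lemma dist'_marginal_fst (X : Ω → α) (Z : Ω → β) (a : α) :
    ∑ b, dist' p (fun ω => (X ω, Z ω)) (a, b) = dist' p X a := by
  unfold dist'
  rw [← Finset.sum_fiberwise (Finset.univ.filter fun ω => X ω = a) Z p]
  refine Finset.sum_congr rfl fun b _ => ?_
  congr 1
  ext ω
  simp [Prod.ext_iff, and_comm]

lemma dist'_pair_le_snd (hp : IsPMF p) (X : Ω → α) (Z : Ω → β) (a : α) (b : β) :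
    dist' p (fun ω => (X ω, Z ω)) (a, b) ≤ dist' p Z b := by
  rw [← dist'_marginal_snd X Z b]
  exact Finset.single_le_sum (f := fun a' => dist' p (fun ω => (X ω, Z ω)) (a', b))
    (fun a' _ => dist'_nonneg hp _ _) (Finset.mem_univ a)

lemma dist'_pair_le_fst (hp : IsPMF p) (X : Ω → α) (Z : Ω → β) (a : α) (b : β) :
    dist' p (fun ω => (X ω, Z ω)) (a, b) ≤ dist' p X a := by
  rw [← dist'_marginal_fst X Z a]
  exact Finset.single_le_sum (f := fun b' => dist' p (fun ω => (X ω, Z ω)) (a, b'))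
    (fun b' _ => dist'_nonneg hp _ _) (Finset.mem_univ b)

/-- Entropy is invariant under injective relabeling. -/
lemma ent_comp_injective (X : Ω → α) {ι : α → β} (hι : Function.Injective ι) :
    ent p (fun ω => ι (X ω)) = ent p X := by
  unfold ent entFun
  congr 1
  have h0 : ∀ b ∈ (Finset.univ : Finset β), b ∉ Finset.univ.image ι →
      dist' p (fun ω => ι (X ω)) b * Real.log (dist' p (fun ω => ι (X ω)) b) = 0 := by
    intro b _ hb
    have hz : dist' p (fun ω => ι (X ω)) b = 0 := by
      unfold dist'
      apply Finset.sum_eq_zero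
      intro ω hω
      exact absurd (Finset.mem_image.mpr ⟨X ω, Finset.mem_univ _,
        (Finset.mem_filter.mp hω).2⟩) hb
    simp [hz]
  rw [← Finset.sum_subset (Finset.subset_univ (Finset.univ.image ι)) h0,
    Finset.sum_image (fun a _ a' _ hh => hι hh)]
  refine Finset.sum_congr rfl fun a _ => ?_
  have : dist' p (fun ω => ι (X ω)) (ι a) = dist' p X a := by
    unfold dist'; congr 1; ext ω; simp [hι.eq_iff]
  rw [this]

/-- If `X` is a deterministic function of `Z`, then `H(X | Z) = 0`. -/
lemma condEnt_of_determined (X : Ω → α) (Z : Ω → β) (φ : β → α)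
    (hφ : ∀ ω, X ω = φ (Z ω)) : condEnt p X Z = 0 := by
  unfold condEnt
  have h1 : (fun ω => (X ω, Z ω)) = (fun ω => (fun z => (φ z, z)) (Z ω)) := by
    funext ω; simp [hφ ω]
  have h2 : Function.Injective (fun z : β => (φ z, z)) := by
    intro z z' hz
    exact (Prod.ext_iff.mp hz).2
  rw [h1, ent_comp_injective Z h2]
  ring

/-- Coarsening can only decrease entropy: `H(Z) ≤ H(X, Z)`. -/
lemma ent_le_ent_pair (hp : IsPMF p) (X : Ω → α) (Z : Ω → β) :
    ent p Z ≤ ent p (fun ω => (X ω, Z ω)) := by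
  unfold ent entFun
  rw [neg_le_neg_iff, Fintype.sum_prod_type]
  rw [show ∑ a : α, ∑ b : β, (fun ab : α × β => dist' p (fun ω => (X ω, Z ω)) ab *
      Real.log (dist' p (fun ω => (X ω, Z ω)) ab)) (a, b)
    = ∑ b : β, ∑ a : α, dist' p (fun ω => (X ω, Z ω)) (a, b) *
      Real.log (dist' p (fun ω => (X ω, Z ω)) (a, b)) from Finset.sum_comm]
  refine Finset.sum_le_sum fun b _ => ?_
  have hmarg := dist'_marginal_snd (p := p) X Z b
  calc ∑ a : α, dist' p (fun ω => (X ω, Z ω)) (a, b) *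
        Real.log (dist' p (fun ω => (X ω, Z ω)) (a, b))
      ≤ ∑ a : α, dist' p (fun ω => (X ω, Z ω)) (a, b) * Real.log (dist' p Z b) := by
        refine Finset.sum_le_sum fun a _ => ?_
        rcases eq_or_lt_of_le (dist'_nonneg hp (fun ω => (X ω, Z ω)) (a, b)) with hq | hq
        · simp [← hq]
        · exact mul_le_mul_of_nonneg_left
            (Real.log_le_log hq (dist'_pair_le_snd hp X Z a b)) (le_of_lt hq)
    _ = dist' p Z b * Real.log (dist' p Z b) := by
        rw [← Finset.sum_mul, hmarg]

/-- Subadditivity of entropy: `H(X, Z) ≤ H(X) + H(Z)`. -/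
lemma ent_pair_le (hp : IsPMF p) (X : Ω → α) (Z : Ω → β) :
    ent p (fun ω => (X ω, Z ω)) ≤ ent p X + ent p Z := by
  set q : α → β → ℝ := fun a b => dist' p (fun ω => (X ω, Z ω)) (a, b) with hq
  set r : α → ℝ := fun a => dist' p X a with hr
  set s : β → ℝ := fun b => dist' p Z b with hs
  have hqnn : ∀ a b, 0 ≤ q a b := fun a b => dist'_nonneg hp _ _
  have hqr : ∀ a b, q a b ≤ r a := fun a b => dist'_pair_le_fst hp X Z a b
  have hqs : ∀ a b, q a b ≤ s b := fun a b => dist'_pair_le_snd hp X Z a b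
  have hmargr : ∀ a, ∑ b, q a b = r a := fun a => dist'_marginal_fst X Z a
  have hmargs : ∀ b, ∑ a, q a b = s b := fun b => dist'_marginal_snd X Z b
  have hrs1 : ∑ a, r a = 1 := dist'_sum hp X
  have hss1 : ∑ b, s b = 1 := dist'_sum hp Z
  -- key Gibbs inequality
  have key : 0 ≤ ∑ a, ∑ b, (q a b * Real.log (q a b)
      - q a b * (Real.log (r a) + Real.log (s b))) := by
    have hterm : ∀ a b, q a b - r a * s b ≤ q a b * Real.log (q a b)
        - q a b * (Real.log (r a) + Real.log (s b)) := by
      intro a b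
      rcases eq_or_lt_of_le (hqnn a b) with hq0 | hq0
      · have : 0 ≤ r a * s b := mul_nonneg (dist'_nonneg hp _ _) (dist'_nonneg hp _ _)
        simp [← hq0]; linarith
      · have hra : 0 < r a := lt_of_lt_of_le hq0 (hqr a b)
        have hsb : 0 < s b := lt_of_lt_of_le hq0 (hqs a b)
        have hlog : Real.log (r a * s b / q a b) ≤ r a * s b / q a b - 1 :=
          Real.log_le_sub_one_of_pos (by positivity)
        have hexp : Real.log (r a * s b / q a b)
            = Real.log (r a) + Real.log (s b) - Real.log (q a b) := by
          rw [Real.log_div (by positivity) (ne_of_gt hq0), Real.log_mul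
            (ne_of_gt hra) (ne_of_gt hsb)]
        have := mul_le_mul_of_nonneg_left hlog (le_of_lt hq0)
        rw [hexp] at this
        have hq' : q a b * (r a * s b / q a b - 1) = r a * s b - q a b := by
          field_simp
        nlinarith
    calc (0:ℝ) = (∑ a, ∑ b, q a b) - (∑ a, r a) * (∑ b, s b) := by
          rw [hss1, hrs1]
          have : ∑ a, ∑ b, q a b = 1 := by
            rw [Finset.sum_congr rfl fun a _ => hmargr a, hrs1]
          rw [this]; ring
      _ = ∑ a, ∑ b, (q a b - r a * s b) := by
          rw [Finset.sum_mul]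
          rw [← Finset.sum_sub_distrib]
          refine Finset.sum_congr rfl fun a _ => ?_
          rw [Finset.mul_sum, ← Finset.sum_sub_distrib]
      _ ≤ _ := by
          refine Finset.sum_le_sum fun a _ => Finset.sum_le_sum fun b _ => hterm a b
  -- expand
  have e1 : ∑ a, ∑ b, q a b * Real.log (r a) = ∑ a, r a * Real.log (r a) := by
    refine Finset.sum_congr rfl fun a _ => ?_
    rw [← Finset.sum_mul, hmargr a]
  have e2 : ∑ a, ∑ b, q a b * Real.log (s b) = ∑ b, s b * Real.log (s b) := by
    rw [Finset.sum_comm]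
    refine Finset.sum_congr rfl fun b _ => ?_
    rw [← Finset.sum_mul, hmargs b]
  have hHq : ent p (fun ω => (X ω, Z ω)) = -∑ a, ∑ b, q a b * Real.log (q a b) := by
    unfold ent entFun
    rw [Fintype.sum_prod_type]
  have hHr : ent p X = -∑ a, r a * Real.log (r a) := rfl
  have hHs : ent p Z = -∑ b, s b * Real.log (s b) := rfl
  have expand : ∑ a, ∑ b, (q a b * Real.log (q a b)
      - q a b * (Real.log (r a) + Real.log (s b)))
      = (∑ a, ∑ b, q a b * Real.log (q a b)) - (∑ a, r a * Real.log (r a))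
        - (∑ b, s b * Real.log (s b)) := by
    rw [← e1, ← e2]
    rw [← Finset.sum_sub_distrib, ← Finset.sum_sub_distrib]
    refine Finset.sum_congr rfl fun a _ => ?_
    rw [← Finset.sum_sub_distrib, ← Finset.sum_sub_distrib]
    refine Finset.sum_congr rfl fun b _ => ?_
    ring
  rw [expand] at key
  rw [hHq, hHr, hHs]
  linarith

lemma ent_bool_eq (hp : IsPMF p) (E : Ω → Bool) :
    ent p E = binEnt (dist' p E true) := by
  have hsum := dist'_sum hp E
  rw [Fintype.sum_bool] at hsum
  unfold ent entFun binEnt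
  rw [Fintype.sum_bool]
  have hfalse : dist' p E false = 1 - dist' p E true := by linarith
  rw [hfalse]; ring

lemma binEnt_eq_binEntropy (x : ℝ) : binEnt x = Real.binEntropy x := by
  unfold binEnt Real.binEntropy
  rw [Real.log_inv, Real.log_inv]; ring

lemma binEnt_mono {t τ : ℝ} (ht : 0 ≤ t) (htτ : t ≤ τ) (hτ : τ ≤ 1/2) :
    binEnt t ≤ binEnt τ := by
  rw [binEnt_eq_binEntropy, binEnt_eq_binEntropy]
  have h2 : (1:ℝ)/2 = 2⁻¹ := by norm_num
  exact Real.binEntropy_strictMonoOn.monotoneOn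
    (Set.mem_Icc.mpr ⟨ht, by linarith [h2 ▸ hτ]⟩)
    (Set.mem_Icc.mpr ⟨le_trans ht htτ, by linarith [h2 ▸ hτ]⟩) htτ

end Aux

set_option maxHeartbeats 1000000 in
/-- If `h(G)` and `f(G)` are deterministic binary classifiers with
`P(h(G) ≠ f(G)) ≤ τ ≤ 1/2` and `I(f(G); G | W) = 0` for a deterministic function
`W = w(G)`, then `I(h(G); G | W) ≤ h_b(τ) + τ·log 2`. -/
theorem condMI_close_classifier {Ω 𝒢 𝒲 : Type*} [Fintype Ω] [Fintype 𝒢] [Fintype 𝒲]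
    (p : Ω → ℝ) (hp : IsPMF p) (G : Ω → 𝒢) (w : 𝒢 → 𝒲) (f h : 𝒢 → Bool)
    (τ : ℝ) (hτ0 : 0 ≤ τ) (hτhalf : τ ≤ 1/2)
    (hdis : prob p (fun ω => h (G ω) ≠ f (G ω)) ≤ τ)
    (hf : condMI p (fun ω => f (G ω)) G (fun ω => w (G ω)) = 0) :
    condMI p (fun ω => h (G ω)) G (fun ω => w (G ω)) ≤ binEnt τ + τ * Real.log 2 := by
  set W : Ω → 𝒲 := fun ω => w (G ω) with hW
  set hG : Ω → Bool := fun ω => h (G ω) with hhG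
  set fG : Ω → Bool := fun ω => f (G ω) with hfG
  set E : Ω → Bool := fun ω => xor (h (G ω)) (f (G ω)) with hE
  -- Step 0: `condEnt hG (G, W) = 0` and `condEnt fG (G, W) = 0`
  have hdet_h : condEnt p hG (fun ω => (G ω, W ω)) = 0 :=
    condEnt_of_determined hG (fun ω => (G ω, W ω)) (fun gw => h gw.1) (fun ω => rfl)
  have hdet_f : condEnt p fG (fun ω => (G ω, W ω)) = 0 :=
    condEnt_of_determined fG (fun ω => (G ω, W ω)) (fun gw => f gw.1) (fun ω => rfl)
  -- Step 1: the goal reduces to bounding `condEnt hG W`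
  have hgoal : condMI p hG G W = condEnt p hG W := by
    unfold condMI
    rw [hdet_h]; ring
  have hfW : condEnt p fG W = 0 := by
    unfold condMI at hf
    rw [hdet_f] at hf
    linarith
  -- Step 2: `condEnt hG W ≤ condEnt fG W + condEnt hG (fG, W)`
  have step2 : condEnt p hG W ≤ condEnt p hG (fun ω => (fG ω, W ω)) := by
    have hco : ent p (fun ω => (hG ω, W ω))
        ≤ ent p (fun ω => (fG ω, (hG ω, W ω))) := ent_le_ent_pair hp fG _
    have hrel : ent p (fun ω => (fG ω, (hG ω, W ω)))
        = ent p (fun ω => (hG ω, (fG ω, W ω))) := by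
      have hι : Function.Injective
          (fun z : Bool × (Bool × 𝒲) => (z.2.1, (z.1, z.2.2))) := by
        intro z z' hz
        obtain ⟨h1, h2, h3⟩ : z.2.1 = z'.2.1 ∧ z.1 = z'.1 ∧ z.2.2 = z'.2.2 := by
          simpa [Prod.ext_iff] using hz
        exact Prod.ext h2 (Prod.ext h1 h3)
      calc ent p (fun ω => (fG ω, (hG ω, W ω)))
          = ent p (fun ω => (fun z : Bool × (Bool × 𝒲) => (z.2.1, (z.1, z.2.2)))
              ((fun ω => (hG ω, (fG ω, W ω))) ω)) := rfl
        _ = ent p (fun ω => (hG ω, (fG ω, W ω))) :=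
            ent_comp_injective (fun ω => (hG ω, (fG ω, W ω))) hι
    unfold condEnt
    have : ent p (fun ω => (fG ω, W ω)) - ent p W = 0 := hfW
    have hW2 : ent p (fun ω => (fG ω, W ω)) = ent p W := by linarith
    rw [hrel] at hco
    linarith
  -- Step 3: `condEnt hG (fG, W) ≤ condEnt E (fG, W)`
  have step3 : condEnt p hG (fun ω => (fG ω, W ω))
      ≤ condEnt p E (fun ω => (fG ω, W ω)) := by
    have hco : ent p (fun ω => (hG ω, (fG ω, W ω)))
        ≤ ent p (fun ω => (E ω, (hG ω, (fG ω, W ω)))) := ent_le_ent_pair hp E _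
    have hι : Function.Injective
        (fun z : Bool × (Bool × Bool × 𝒲) => (z.2.1, (z.1, z.2.2))) := by
      intro z z' hz
      obtain ⟨h1, h2, h3⟩ : z.2.1 = z'.2.1 ∧ z.1 = z'.1 ∧ z.2.2 = z'.2.2 := by
        simpa [Prod.ext_iff] using hz
      exact Prod.ext h2 (Prod.ext h1 h3)
    have hrel : ent p (fun ω => (E ω, (hG ω, (fG ω, W ω))))
        = ent p (fun ω => (hG ω, (E ω, (fG ω, W ω)))) := by
      calc ent p (fun ω => (E ω, (hG ω, (fG ω, W ω))))
          = ent p (fun ω => (fun z : Bool × (Bool × Bool × 𝒲) => (z.2.1, (z.1, z.2.2)))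
              ((fun ω => (hG ω, (E ω, (fG ω, W ω)))) ω)) := rfl
        _ = ent p (fun ω => (hG ω, (E ω, (fG ω, W ω)))) :=
            ent_comp_injective (fun ω => (hG ω, (E ω, (fG ω, W ω)))) hι
    have hdet : condEnt p hG (fun ω => (E ω, (fG ω, W ω))) = 0 := by
      refine condEnt_of_determined hG _ (fun z => xor z.1 z.2.1) fun ω => ?_
      show h (G ω) = xor (xor (h (G ω)) (f (G ω))) (f (G ω))
      cases h (G ω) <;> cases f (G ω) <;> rfl
    have hexp : condEnt p hG (fun ω => (E ω, (fG ω, W ω)))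
        = ent p (fun ω => (hG ω, (E ω, (fG ω, W ω))))
          - ent p (fun ω => (E ω, (fG ω, W ω))) := rfl
    unfold condEnt
    rw [hrel] at hco
    rw [hexp] at hdet
    linarith
  -- Step 4: `condEnt E (fG, W) ≤ ent E`
  have step4 : condEnt p E (fun ω => (fG ω, W ω)) ≤ ent p E := by
    have := ent_pair_le hp E (fun ω => (fG ω, W ω))
    unfold condEnt
    linarith
  -- Step 5: `ent E = binEnt t` with `t ≤ τ`
  have ht_eq : dist' p E true = prob p (fun ω => h (G ω) ≠ f (G ω)) := by
    unfold dist' prob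
    congr 1
    ext ω
    simp only [Finset.mem_filter, Finset.mem_univ, true_and, hE]
    cases h (G ω) <;> cases f (G ω) <;> simp
  have ht0 : 0 ≤ dist' p E true := dist'_nonneg hp E true
  have htτ : dist' p E true ≤ τ := ht_eq ▸ hdis
  have step5 : ent p E ≤ binEnt τ := by
    rw [ent_bool_eq hp E]
    exact binEnt_mono ht0 htτ hτhalf
  have hτlog : 0 ≤ τ * Real.log 2 :=
    mul_nonneg hτ0 (le_of_lt (Real.log_pos (by norm_num)))
  calc condMI p hG G W = condEnt p hG W := hgoal
    _ ≤ condEnt p hG (fun ω => (fG ω, W ω)) := step2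
    _ ≤ condEnt p E (fun ω => (fG ω, W ω)) := step3
    _ ≤ ent p E := step4
    _ ≤ binEnt τ := step5
    _ ≤ binEnt τ + τ * Real.log 2 := by linarith
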